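/- arXiv:1812.09114 — 3 statements merged into one kernel-verified Lean document; each statement's English description precedes it below -/
import Mathlib

section
/- If e^{iγ} R_Z(α₃) R_X(α₂) R_Z(α₁) = e^{iγ'} R_Z(α₃') R_X(α₂') R_Z(α₁') as 2×2 matrices, with α₂ ≢ 0 (mod π), α₂,α₂' ∈ [0,2π), α₃,α₃',γ,γ' ∈ [0,2π), and α₁, α₁' ∈ [0,π), then α₁ = α₁', α₂ = α₂', α₃ = α₃' (mod 2π) and γ = γ' (mod 2π). -/
open Complex Matrix Real

noncomputable def Rz (α : ℝ) : Matrix (Fin 2) (Fin 2) ℂ :=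
  !![1, 0; 0, Complex.exp (α * Complex.I)]

noncomputable def Hmat : Matrix (Fin 2) (Fin 2) ℂ :=
  ((Real.sqrt 2 : ℂ))⁻¹ • !![1, 1; 1, -1]

noncomputable def Rx (α : ℝ) : Matrix (Fin 2) (Fin 2) ℂ :=
  Hmat * Rz α * Hmat

lemma one_add_exp (α : ℝ) :
    1 + Complex.exp (α * Complex.I)
      = 2 * (Real.cos (α/2) : ℂ) * Complex.exp ((α/2 : ℝ) * Complex.I) := by
  have hc := Real.cos_two_mul (α/2)
  have hs := Real.sin_two_mul (α/2)
  rw [show (2:ℝ)*(α/2) = α by ring] at hc hs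
  rw [Complex.exp_mul_I, Complex.exp_mul_I, ← Complex.ofReal_cos, ← Complex.ofReal_sin,
    ← Complex.ofReal_cos, ← Complex.ofReal_sin, hc, hs]
  push_cast [← Complex.ofReal_sin, ← Complex.ofReal_cos]
  ring

lemma one_sub_exp (α : ℝ) :
    1 - Complex.exp (α * Complex.I)
      = -2 * Complex.I * (Real.sin (α/2) : ℂ) * Complex.exp ((α/2 : ℝ) * Complex.I) := by
  have hc : Real.cos α = 1 - 2*Real.sin (α/2)^2 := by
    have h' := Real.cos_two_mul' (α/2)
    rw [show (2:ℝ)*(α/2) = α by ring] at h'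
    nlinarith [Real.sin_sq_add_cos_sq (α/2)]
  have hs := Real.sin_two_mul (α/2)
  rw [show (2:ℝ)*(α/2) = α by ring] at hs
  rw [Complex.exp_mul_I, Complex.exp_mul_I, ← Complex.ofReal_cos, ← Complex.ofReal_sin,
    ← Complex.ofReal_cos, ← Complex.ofReal_sin, hc, hs]
  push_cast [← Complex.ofReal_sin, ← Complex.ofReal_cos]
  linear_combination (2*(Real.sin (α/2):ℂ)^2) * Complex.I_sq

lemma exp_inj_Ico {x y : ℝ} (hx : x ∈ Set.Ico 0 (2*Real.pi)) (hy : y ∈ Set.Ico 0 (2*Real.pi))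
    (h : Complex.exp (x * Complex.I) = Complex.exp (y * Complex.I)) : x = y := by
  rw [Complex.exp_eq_exp_iff_exists_int] at h
  obtain ⟨n, hn⟩ := h
  have h2 : (x : ℂ) = ((y + n * (2*Real.pi) : ℝ) : ℂ) :=
    mul_right_cancel₀ Complex.I_ne_zero (hn.trans (by push_cast; ring))
  have hxy : x = y + n * (2*Real.pi) := by exact_mod_cast h2
  have hpi := Real.pi_pos
  rcases lt_trichotomy n 0 with hn0 | hn0 | hn0
  · have hn1 : n ≤ -1 := by omega
    have : (n:ℝ) ≤ -1 := by exact_mod_cast hn1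
    nlinarith [hx.1, hx.2, hy.1, hy.2]
  · simp [hn0] at hxy; linarith [hxy]
  · have hn1 : (1:ℤ) ≤ n := hn0
    have : (1:ℝ) ≤ n := by exact_mod_cast hn1
    nlinarith [hx.1, hx.2, hy.1, hy.2]

lemma prod_entries (γ α₁ α₂ α₃ : ℝ) :
    Complex.exp (γ * Complex.I) • (Rz α₃ * Rx α₂ * Rz α₁) =
      !![Complex.exp (γ*Complex.I) * (1 + Complex.exp (α₂*Complex.I))/2,
         Complex.exp (γ*Complex.I) * (1 - Complex.exp (α₂*Complex.I)) * Complex.exp (α₁*Complex.I)/2;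
         Complex.exp (γ*Complex.I) * (1 - Complex.exp (α₂*Complex.I)) * Complex.exp (α₃*Complex.I)/2,
         Complex.exp (γ*Complex.I) * (1 + Complex.exp (α₂*Complex.I)) * Complex.exp (α₁*Complex.I) * Complex.exp (α₃*Complex.I)/2] := by
  have hs2 : ((Real.sqrt 2 : ℝ) : ℂ) * ((Real.sqrt 2 : ℝ):ℂ) = 2 := by
    rw [← Complex.ofReal_mul, Real.mul_self_sqrt (by norm_num : (0:ℝ) ≤ 2)]
    norm_num
  have hinv2 : ((Real.sqrt 2 : ℝ) : ℂ)⁻¹ ^ 2 = 1/2 := by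
    rw [sq, ← mul_inv, hs2]
    norm_num
  ext i j
  fin_cases i <;> fin_cases j <;>
    simp [Rz, Rx, Hmat, Matrix.mul_apply, Fin.sum_univ_two, Matrix.smul_apply] <;>
    ring_nf <;> rw [hinv2] <;> ring

theorem euler_decomposition_unique
    (γ γ' α₁ α₂ α₃ α₁' α₂' α₃' : ℝ)
    (h : Complex.exp (γ * Complex.I) • (Rz α₃ * Rx α₂ * Rz α₁) =
         Complex.exp (γ' * Complex.I) • (Rz α₃' * Rx α₂' * Rz α₁'))
    (hα₂ : ¬ ∃ k : ℤ, α₂ = k * Real.pi)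
    (h2 : α₂ ∈ Set.Ico 0 (2 * Real.pi)) (h2' : α₂' ∈ Set.Ico 0 (2 * Real.pi))
    (h3 : α₃ ∈ Set.Ico 0 (2 * Real.pi)) (h3' : α₃' ∈ Set.Ico 0 (2 * Real.pi))
    (hg : γ ∈ Set.Ico 0 (2 * Real.pi)) (hg' : γ' ∈ Set.Ico 0 (2 * Real.pi))
    (h1 : α₁ ∈ Set.Ico 0 Real.pi) (h1' : α₁' ∈ Set.Ico 0 Real.pi) :
    α₁ = α₁' ∧ α₂ = α₂' ∧ α₃ = α₃' ∧ γ = γ' := by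
  have hpi := Real.pi_pos
  rw [prod_entries, prod_entries] at h
  have h00 := Matrix.ext_iff.mpr h 0 0
  have h01 := Matrix.ext_iff.mpr h 0 1
  have h10 := Matrix.ext_iff.mpr h 1 0
  simp only [Matrix.cons_val', Matrix.cons_val_zero, Matrix.cons_val_one, Matrix.head_cons,
    Matrix.empty_val', Matrix.cons_val_fin_one, Matrix.head_fin_const, Matrix.of_apply] at h00 h01 h10
  rw [one_add_exp α₂, one_add_exp α₂'] at h00
  rw [one_sub_exp α₂, one_sub_exp α₂'] at h01 h10
  -- notation
  set Eγ := Complex.exp (γ * Complex.I) with hEγ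
  set Eγ' := Complex.exp (γ' * Complex.I) with hEγ'
  set hh := Complex.exp ((α₂/2 : ℝ) * Complex.I) with hhh
  set hh' := Complex.exp ((α₂'/2 : ℝ) * Complex.I) with hhh'
  set e1 := Complex.exp (α₁ * Complex.I) with he1
  set e1' := Complex.exp (α₁' * Complex.I) with he1'
  set e3 := Complex.exp (α₃ * Complex.I) with he3
  set e3' := Complex.exp (α₃' * Complex.I) with he3'
  set c := Real.cos (α₂/2) with hcdef
  set c' := Real.cos (α₂'/2) with hcdef'
  set s := Real.sin (α₂/2) with hsdef
  set s' := Real.sin (α₂'/2) with hsdef'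
  -- basic nonvanishing facts
  have hs_pos : 0 < s := by
    apply Real.sin_pos_of_pos_of_lt_pi
    · rcases lt_or_eq_of_le h2.1 with h | h
      · linarith
      · exact absurd ⟨0, by simp [← h]⟩ hα₂
    · linarith [h2.2]
  have hc_ne : c ≠ 0 := by
    intro hc0
    rw [hcdef, Real.cos_eq_zero_iff] at hc0
    obtain ⟨n, hn⟩ := hc0
    exact hα₂ ⟨2*n+1, by push_cast; linarith⟩
  -- abs equalities
  have habs00 : |c| = |c'| := by
    have := congrArg (‖·‖) h00
    simpa [norm_mul, norm_div, ← Complex.ofReal_div, Complex.norm_exp_ofReal_mul_I, Complex.norm_real, hEγ, hEγ',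
      hhh, hhh'] using this
  have habs01 : |s| = |s'| := by
    have := congrArg (‖·‖) h01
    simpa [norm_mul, norm_div, ← Complex.ofReal_div, Complex.norm_exp_ofReal_mul_I, Complex.norm_real, Complex.norm_I,
      hEγ, hEγ', hhh, hhh', he1, he1'] using this
  have hs'_eq : s' = s := by
    have hs'_nonneg : 0 ≤ s' := by
      apply Real.sin_nonneg_of_nonneg_of_le_pi
      · linarith [h2'.1]
      · linarith [h2'.2]
    rw [_root_.abs_of_pos hs_pos, _root_.abs_of_nonneg hs'_nonneg] at habs01
    linarith
  have hEγ_ne : Eγ ≠ 0 := hEγ ▸ Complex.exp_ne_zero _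
  have hEγ'_ne : Eγ' ≠ 0 := hEγ' ▸ Complex.exp_ne_zero _
  have hhh_ne : hh ≠ 0 := hhh ▸ Complex.exp_ne_zero _
  have hsC_ne : ((s:ℝ):ℂ) ≠ 0 := by exact_mod_cast hs_pos.ne'
  have hcC_ne : ((c:ℝ):ℂ) ≠ 0 := by exact_mod_cast hc_ne
  have key : (s:ℂ) * ↑c' * e1 * (Eγ * hh) * (-2*Complex.I)
      = (s':ℂ) * ↑c * e1' * (Eγ * hh) * (-2*Complex.I) := by
    linear_combination (2*(c':ℂ)) * h01 + (2*Complex.I*(s':ℂ)*e1') * h00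
  have key2 : (s:ℂ) * (↑c' * e1) = (s:ℂ) * (↑c * e1') := by
    have h2I : (-2*Complex.I : ℂ) ≠ 0 := by simp [Complex.I_ne_zero]
    have hA : Eγ * hh ≠ 0 := mul_ne_zero hEγ_ne hhh_ne
    have k1 := mul_right_cancel₀ hA (mul_right_cancel₀ h2I key)
    rw [hs'_eq] at k1
    linear_combination k1
  have keyc : (c':ℂ) * e1 = (c:ℂ) * e1' := mul_left_cancel₀ hsC_ne key2
  rcases abs_eq_abs.mp habs00 with hcc | hcc
  swap
  · -- c = -c' : contradiction
    exfalso
    have hc'_ne : c' ≠ 0 := fun h0 => hc_ne (by rw [hcc, h0, neg_zero])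
    have hc'C_ne : ((c':ℝ):ℂ) ≠ 0 := by exact_mod_cast hc'_ne
    have he : e1 = -e1' := by
      apply mul_left_cancel₀ hc'C_ne
      rw [keyc, hcc]
      push_cast
      ring
    rw [he1, he1'] at he
    have him := congrArg Complex.im he
    simp [Complex.exp_ofReal_mul_I_im] at him
    have hsn : 0 ≤ Real.sin α₁ := Real.sin_nonneg_of_nonneg_of_le_pi h1.1 (le_of_lt h1.2)
    have hsn' : 0 ≤ Real.sin α₁' := Real.sin_nonneg_of_nonneg_of_le_pi h1'.1 (le_of_lt h1'.2)
    have hz : Real.sin α₁ = 0 := by linarith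
    have hz' : Real.sin α₁' = 0 := by linarith
    have h10' : α₁ = 0 := by
      rwa [Real.sin_eq_zero_iff_of_lt_of_lt (by linarith [h1.1] : -Real.pi < α₁) h1.2] at hz
    have h10'' : α₁' = 0 := by
      rwa [Real.sin_eq_zero_iff_of_lt_of_lt (by linarith [h1'.1] : -Real.pi < α₁') h1'.2] at hz'
    rw [h10', h10''] at he
    simp at he
    norm_num at he
  · -- main case : c = c'
    have hc'C_ne : ((c':ℝ):ℂ) ≠ 0 := by rw [← hcc]; exact hcC_ne
    have he : e1 = e1' := by
      apply mul_left_cancel₀ hc'C_ne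
      rw [keyc, hcc]
    have hα1 : α₁ = α₁' := by
      refine exp_inj_Ico ⟨h1.1, by linarith [h1.2]⟩ ⟨h1'.1, by linarith [h1'.2]⟩ ?_
      rw [← he1, ← he1']
      exact he
    have hα2 : α₂ = α₂' := by
      have hmem : α₂/2 ∈ Set.Icc 0 Real.pi := ⟨by linarith [h2.1], by linarith [h2.2]⟩
      have hmem' : α₂'/2 ∈ Set.Icc 0 Real.pi := ⟨by linarith [h2'.1], by linarith [h2'.2]⟩
      have := Real.injOn_cos hmem hmem' (by rw [← hcdef, ← hcdef', hcc])
      linarith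
    have hhheq : hh = hh' := by rw [hhh, hhh', hα2]
    have hcc' : (c':ℝ) = c := hcc.symm
    have hEeq : Eγ = Eγ' := by
      apply mul_right_cancel₀ (show (2*(c:ℂ)*hh) ≠ 0 from by
        apply mul_ne_zero (mul_ne_zero two_ne_zero hcC_ne) hhh_ne)
      rw [hcc', ← hhheq] at h00
      linear_combination 2 * h00
    have hγ : γ = γ' := by
      refine exp_inj_Ico hg hg' ?_
      rw [← hEγ, ← hEγ']
      exact hEeq
    have hα3 : α₃ = α₃' := by
      have hs'C : ((s':ℝ):ℂ) = (s:ℂ) := by rw [hs'_eq]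
      rw [← hhheq, ← hEeq, hs'C] at h10
      have he3eq : e3 = e3' := by
        apply mul_left_cancel₀ (show Eγ * (-2*Complex.I) * (s:ℂ) * hh ≠ 0 from by
          apply mul_ne_zero (mul_ne_zero (mul_ne_zero hEγ_ne (by simp [Complex.I_ne_zero])) hsC_ne) hhh_ne)
        linear_combination 2 * h10
      refine exp_inj_Ico h3 h3' ?_
      rw [← he3, ← he3']
      exact he3eq
    exact ⟨hα1, hα2, hα3, hγ⟩
end

section
/- With the notation z = cos(α₂/2)cos(x⁺) + i sin(α₂/2)cos(x⁻), z' = cos(α₂/2)sin(x⁺) - i sin(α₂/2)sin(x⁻) where x⁺ = (α₁+α₃)/2 and x⁻ = x⁺ - α₃, and assuming z ≠ 0 and z' ≠ 0, define β₁ = arg z + arg z', β₂ = 2·arg(i + |z/z'|), β₃ = arg z - arg z', γ = x⁺ - arg z + (α₂ - β₂)/2. Then R_Z(α₃)·R_X(α₂)·R_Z(α₁) = e^{iγ}·R_X(β₃)·R_Z(β₂)·R_X(β₁) as 2×2 complex matrices. -/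
set_option maxHeartbeats 1000000

open Complex Matrix Real

lemma key (a b c : ℝ) :
    Rz c * Rx b * Rz a =
      Complex.exp ((b/2 + (a+c)/2) * Complex.I) •
        !![(Real.cos (b/2) : ℂ) * Complex.exp ((-((a+c)/2) : ℝ) * Complex.I),
           -Complex.I * (Real.sin (b/2) : ℂ) * Complex.exp (((a-c)/2 : ℝ) * Complex.I);
           -Complex.I * (Real.sin (b/2) : ℂ) * Complex.exp ((-((a-c)/2) : ℝ) * Complex.I),
           (Real.cos (b/2) : ℂ) * Complex.exp (((a+c)/2 : ℝ) * Complex.I)] := by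
  have h2 : ((Real.sqrt 2 : ℂ))⁻¹ * ((Real.sqrt 2 : ℂ))⁻¹ = (2 : ℂ)⁻¹ := by
    rw [← mul_inv, ← Complex.ofReal_mul, Real.mul_self_sqrt (by norm_num)]; norm_num
  set P := Complex.exp ((b : ℂ)/2 * Complex.I) with hP
  have hP0 : P ≠ 0 := Complex.exp_ne_zero _
  have eb : Complex.exp ((b : ℂ) * Complex.I) = P * P := by
    rw [hP, ← Complex.exp_add]; ring_nf
  have ea : Complex.exp ((a : ℂ) * Complex.I)
      = Complex.exp (((a : ℂ)+c)/2 * Complex.I) * Complex.exp (((a : ℂ)-c)/2 * Complex.I) := by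
    rw [← Complex.exp_add]; ring_nf
  have ec : Complex.exp ((c : ℂ) * Complex.I)
      = Complex.exp (((a : ℂ)+c)/2 * Complex.I) * (Complex.exp (((a : ℂ)-c)/2 * Complex.I))⁻¹ := by
    rw [← Complex.exp_neg, ← Complex.exp_add]; ring_nf
  have es : Complex.exp (((b : ℂ)/2 + ((a : ℂ)+c)/2) * Complex.I)
      = P * Complex.exp (((a : ℂ)+c)/2 * Complex.I) := by
    rw [hP, ← Complex.exp_add]; ring_nf
  have en : ∀ w : ℂ, Complex.exp (-(w * Complex.I)) = (Complex.exp (w * Complex.I))⁻¹ :=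
    fun w => Complex.exp_neg _
  have hcos : Complex.cos ((b : ℂ)/2) = (P + P⁻¹)/2 := by
    rw [Complex.cos, neg_mul, Complex.exp_neg, hP]
  have hsin' : Complex.I * Complex.sin ((b : ℂ)/2) = (P - P⁻¹)/2 := by
    rw [Complex.sin, neg_mul, Complex.exp_neg, hP]
    linear_combination ((Complex.exp ((b : ℂ)/2 * Complex.I))⁻¹
      - Complex.exp ((b : ℂ)/2 * Complex.I))/2 * Complex.I_sq
  have hH : ∀ x : ℂ, ((Real.sqrt 2 : ℂ))⁻¹ * x * ((Real.sqrt 2 : ℂ))⁻¹ = x / 2 := by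
    intro x
    rw [show ((Real.sqrt 2 : ℂ))⁻¹ * x * ((Real.sqrt 2 : ℂ))⁻¹
        = (((Real.sqrt 2 : ℂ))⁻¹ * ((Real.sqrt 2 : ℂ))⁻¹) * x by ring, h2]
    ring
  ext i j
  fin_cases i <;> fin_cases j <;>
    simp [Rz, Rx, Hmat, Matrix.mul_apply, Fin.sum_univ_two] <;>
    simp only [h2, hH, eb, ea, ec, es, en, hcos, hsin'] <;>
    field_simp [Complex.exp_ne_zero] <;>
    ring

theorem EU_rule_sound (α₁ α₂ α₃ : ℝ) (z z' : ℂ) (β₁ β₂ β₃ γ : ℝ)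
    (hz : z = Real.cos (α₂ / 2) * Real.cos ((α₁ + α₃) / 2) +
      Complex.I * (Real.sin (α₂ / 2) * Real.cos ((α₁ + α₃) / 2 - α₃)))
    (hz' : z' = Real.cos (α₂ / 2) * Real.sin ((α₁ + α₃) / 2) -
      Complex.I * (Real.sin (α₂ / 2) * Real.sin ((α₁ + α₃) / 2 - α₃)))
    (hz0 : z ≠ 0) (hz'0 : z' ≠ 0)
    (hβ₁ : β₁ = Complex.arg z + Complex.arg z')
    (hβ₂ : β₂ = 2 * Complex.arg (Complex.I + (‖z / z'‖ : ℂ)))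
    (hβ₃ : β₃ = Complex.arg z - Complex.arg z')
    (hγ : γ = (α₁ + α₃) / 2 - Complex.arg z + (α₂ - β₂) / 2) :
    Rz α₃ * Rx α₂ * Rz α₁ =
      Complex.exp (γ * Complex.I) • (Rx β₃ * Rz β₂ * Rx β₁) := by
  have simpset : True := trivial
  have hre : z.re = Real.cos (α₂/2) * Real.cos ((α₁+α₃)/2) := by
    rw [hz]
    simp only [Complex.add_re, Complex.sub_re, Complex.add_im, Complex.sub_im,
      Complex.mul_re, Complex.mul_im, Complex.ofReal_re, Complex.ofReal_im,
      Complex.I_re, Complex.I_im]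
    ring
  have him : z.im = Real.sin (α₂/2) * Real.cos ((α₁+α₃)/2 - α₃) := by
    rw [hz]
    simp only [Complex.add_re, Complex.sub_re, Complex.add_im, Complex.sub_im,
      Complex.mul_re, Complex.mul_im, Complex.ofReal_re, Complex.ofReal_im,
      Complex.I_re, Complex.I_im]
    ring
  have hre' : z'.re = Real.cos (α₂/2) * Real.sin ((α₁+α₃)/2) := by
    rw [hz']
    simp only [Complex.add_re, Complex.sub_re, Complex.add_im, Complex.sub_im,
      Complex.mul_re, Complex.mul_im, Complex.ofReal_re, Complex.ofReal_im,
      Complex.I_re, Complex.I_im]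
    ring
  have him' : z'.im = -(Real.sin (α₂/2) * Real.sin ((α₁+α₃)/2 - α₃)) := by
    rw [hz']
    simp only [Complex.add_re, Complex.sub_re, Complex.add_im, Complex.sub_im,
      Complex.mul_re, Complex.mul_im, Complex.ofReal_re, Complex.ofReal_im,
      Complex.I_re, Complex.I_im]
    ring
  have h1 : (‖z‖)^2 + (‖z'‖)^2 = 1 := by
    rw [Complex.sq_norm, Complex.sq_norm, Complex.normSq_apply, Complex.normSq_apply,
      hre, him, hre', him']
    nlinarith [Real.sin_sq_add_cos_sq (α₂/2), Real.sin_sq_add_cos_sq ((α₁+α₃)/2),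
      Real.sin_sq_add_cos_sq ((α₁+α₃)/2 - α₃)]
  have hr'pos : 0 < ‖z'‖ := norm_pos_iff.mpr hz'0
  set w : ℂ := Complex.I + (‖z / z'‖ : ℂ) with hw
  have hwre : w.re = ‖z‖ / ‖z'‖ := by simp [hw, map_div₀]
  have hwim : w.im = 1 := by simp [hw]
  have hw0 : w ≠ 0 := by intro h; rw [h] at hwim; simp at hwim
  have hwabs : ‖w‖ = (‖z'‖)⁻¹ := by
    have hsq : (‖w‖)^2 = ((‖z'‖)⁻¹)^2 := by
      rw [Complex.sq_norm, Complex.normSq_apply, hwre, hwim]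
      field_simp
      nlinarith [h1]
    calc ‖w‖ = Real.sqrt ((‖w‖)^2) :=
          (Real.sqrt_sq (norm_nonneg w)).symm
      _ = Real.sqrt (((‖z'‖)⁻¹)^2) := by rw [hsq]
      _ = (‖z'‖)⁻¹ := Real.sqrt_sq (by positivity)
  have hβhalf : β₂ / 2 = Complex.arg w := by rw [hβ₂]; ring
  have hcosβ : Real.cos (β₂/2) = ‖z‖ := by
    rw [hβhalf, Complex.cos_arg hw0, hwre, hwabs]
    field_simp
  have hsinβ : Real.sin (β₂/2) = ‖z'‖ := by
    rw [hβhalf, Complex.sin_arg, hwim, hwabs]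
    field_simp
  have hz4 : (‖z‖ : ℂ) * Complex.exp ((Complex.arg z : ℝ) * Complex.I) = z :=
    Complex.norm_mul_exp_arg_mul_I z
  have hz2 : (‖z'‖ : ℂ) * Complex.exp ((Complex.arg z' : ℝ) * Complex.I) = z' :=
    Complex.norm_mul_exp_arg_mul_I z'
  have hconj : ∀ u : ℂ, (‖u‖ : ℂ) * Complex.exp ((-(Complex.arg u) : ℝ) * Complex.I)
      = (starRingEnd ℂ) u := by
    intro u
    have h := congrArg (starRingEnd ℂ) (Complex.norm_mul_exp_arg_mul_I u)
    rw [_root_.map_mul, Complex.conj_ofReal, ← Complex.exp_conj, _root_.map_mul,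
      Complex.conj_ofReal, Complex.conj_I] at h
    rw [← h]; push_cast; ring_nf
  have hM : !![(Real.cos (β₂/2) : ℂ) * Complex.exp ((-((β₁+β₃)/2) : ℝ) * Complex.I),
        -Complex.I * (Real.sin (β₂/2) : ℂ) * Complex.exp (((β₁-β₃)/2 : ℝ) * Complex.I);
        -Complex.I * (Real.sin (β₂/2) : ℂ) * Complex.exp ((-((β₁-β₃)/2) : ℝ) * Complex.I),
        (Real.cos (β₂/2) : ℂ) * Complex.exp (((β₁+β₃)/2 : ℝ) * Complex.I)]
      = !![(starRingEnd ℂ) z, -Complex.I * z';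
           -Complex.I * (starRingEnd ℂ) z', z] := by
    have e1 : (β₁+β₃)/2 = Complex.arg z := by rw [hβ₁, hβ₃]; ring
    have e2 : (β₁-β₃)/2 = Complex.arg z' := by rw [hβ₁, hβ₃]; ring
    have p2 : -Complex.I * (‖z'‖ : ℂ) * Complex.exp ((Complex.arg z' : ℝ) * Complex.I)
        = -Complex.I * z' := by rw [mul_assoc, hz2]
    have p3 : -Complex.I * (‖z'‖ : ℂ) * Complex.exp ((-(Complex.arg z') : ℝ) * Complex.I)
        = -Complex.I * (starRingEnd ℂ) z' := by rw [mul_assoc, hconj z']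
    rw [hcosβ, hsinβ, e1, e2, hconj z, p2, p3, hz4]
  have hRx : Rx β₃ * Rz β₂ * Rx β₁ = Hmat * (Rz β₃ * Rx β₂ * Rz β₁) * Hmat := by
    simp only [Rx, Matrix.mul_assoc]
  rw [key α₁ α₂ α₃, hRx, key β₁ β₂ β₃, hM]
  rw [Matrix.mul_smul, Matrix.smul_mul, smul_smul]
  have hphase : Complex.exp ((γ : ℂ) * Complex.I)
      * Complex.exp (((β₂ : ℂ)/2 + ((β₁ : ℂ)+(β₃ : ℂ))/2) * Complex.I)
      = Complex.exp (((α₂ : ℂ)/2 + ((α₁ : ℂ)+(α₃ : ℂ))/2) * Complex.I) := by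
    rw [← Complex.exp_add, ← add_mul]
    congr 2
    norm_cast
    rw [hγ, hβ₁, hβ₃]
    ring
  rw [hphase]
  congr 1
  have h2 : ((Real.sqrt 2 : ℂ))⁻¹ * ((Real.sqrt 2 : ℂ))⁻¹ = (2 : ℂ)⁻¹ := by
    rw [← mul_inv, ← Complex.ofReal_mul, Real.mul_self_sqrt (by norm_num)]; norm_num
  have hH : ∀ x : ℂ, ((Real.sqrt 2 : ℂ))⁻¹ * x * ((Real.sqrt 2 : ℂ))⁻¹ = x / 2 := by
    intro x
    rw [show ((Real.sqrt 2 : ℂ))⁻¹ * x * ((Real.sqrt 2 : ℂ))⁻¹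
        = (((Real.sqrt 2 : ℂ))⁻¹ * ((Real.sqrt 2 : ℂ))⁻¹) * x by ring, h2]
    ring
  have hHmat : ∀ X : Matrix (Fin 2) (Fin 2) ℂ, Hmat * X * Hmat
      = (2:ℂ)⁻¹ • (!![1,1;1,-1] * X * !![(1:ℂ),1;1,-1]) := by
    intro X
    rw [Hmat, Matrix.smul_mul, Matrix.mul_smul, Matrix.smul_mul, smul_smul, h2]
  rw [hHmat]
  have ex : ∀ x : ℝ, Complex.exp ((x:ℝ) * Complex.I)
      = (Real.cos x : ℂ) + (Real.sin x : ℂ) * Complex.I := by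
    intro x; rw [Complex.exp_mul_I, ← Complex.ofReal_cos, ← Complex.ofReal_sin]
  ext i j
  fin_cases i <;> fin_cases j <;>
    simp only [Matrix.smul_apply, Matrix.mul_apply, Fin.sum_univ_two, Matrix.cons_val',
      Matrix.cons_val_zero, Matrix.cons_val_one, Matrix.head_cons, Matrix.head_fin_const,
      Matrix.empty_val', Matrix.cons_val_fin_one, smul_eq_mul] <;>
    rw [inv_mul_eq_div, eq_div_iff (two_ne_zero)] <;>
    simp only [hz, hz', ex, Real.cos_neg, Real.sin_neg, _root_.map_add, _root_.map_sub,
      _root_.map_mul, Complex.conj_ofReal, Complex.conj_I] <;>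
    (apply Complex.ext) <;> simp <;> ring
end

section
/- Let v₁ = s₁·(1+e^{iα₁}, e^{iβ₁}(1-e^{iα₁}))ᵀ and v₂ = s₂·(1+e^{iα₂}, e^{iβ₂}(1-e^{iα₂}))ᵀ be nonzero vectors in ℂ² with s₁, s₂ ∈ ℂ, β₁, β₂ ∈ [0, π), α₁, α₂ ∈ [0, 2π). If v₁ = v₂, then either (α₁ ≡ α₂ mod 2π and α₁ ≡ 0 mod π), or (α₁ = α₂ and β₁ = β₂). -/
open Complex Real Set

/-!
By the half-angle formulas, `(1 + e^{iα}, e^{iβ}(1 - e^{iα})) = 2 e^{iα/2} (cos θ, -i e^{iβ} sin θ)`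
with `θ = α/2 ∈ [0, π)`, so the hypothesis says that two such half-angle vectors are nonzero
multiples of each other. A vanishing coordinate on one side then vanishes on the other, which
settles `θ ∈ {0, π/2}`. Otherwise cross-multiplying gives
`cos θ₁ sin θ₂ e^{iβ₂} = cos θ₂ sin θ₁ e^{iβ₁}` with nonzero real coefficients, whence
`sin (β₂ - β₁) = 0` and then `sin (θ₂ - θ₁) = 0`; on the window `[0, π)` both force equality.
-/

lemma one_add_exp_two_mul_I (w : ℂ) : 1 + exp (2 * w * I) = 2 * cos w * exp (w * I) := by
  rw [← cos_add_sin_I, ← cos_add_sin_I, Complex.cos_two_mul, Complex.sin_two_mul]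
  ring

lemma one_sub_exp_two_mul_I (w : ℂ) : 1 - exp (2 * w * I) = -2 * I * sin w * exp (w * I) := by
  rw [← cos_add_sin_I, ← cos_add_sin_I, Complex.cos_two_mul, Complex.sin_two_mul]
  linear_combination (-2 : ℂ) * Complex.sin_sq_add_cos_sq w + 2 * sin w ^ 2 * I_sq

lemma svd_form_eq_smul_half_angle (α β : ℝ) :
    ![1 + exp (α * I), exp (β * I) * (1 - exp (α * I))] =
      (2 * exp ((α / 2 : ℝ) * I)) •
        ![(Real.cos (α / 2) : ℂ), -I * (exp (β * I) * Real.sin (α / 2))] := by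
  have hα : (α : ℂ) = 2 * ((α / 2 : ℝ) : ℂ) := by push_cast; ring
  rw [hα, one_add_exp_two_mul_I, one_sub_exp_two_mul_I, ofReal_cos, ofReal_sin]
  ext i
  fin_cases i <;>
    simp only [Fin.zero_eta, Fin.mk_one, Matrix.cons_val_zero, Matrix.cons_val_one,
      Matrix.cons_val_fin_one, Pi.smul_apply, smul_eq_mul] <;> ring

lemma eq_zero_iff_of_mul_eq_mul {M₀ : Type*} [MulZeroClass M₀] [NoZeroDivisors M₀]
    {c₁ c₂ x₁ x₂ : M₀} (hc₁ : c₁ ≠ 0) (hc₂ : c₂ ≠ 0) (h : c₁ * x₁ = c₂ * x₂) :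
    x₁ = 0 ↔ x₂ = 0 := by
  rw [← mul_eq_zero_iff_left hc₁, h, mul_eq_zero_iff_left hc₂]

lemma eq_of_sin_sub_eq_zero {x y : ℝ} (hx : x ∈ Ico 0 π) (hy : y ∈ Ico 0 π)
    (h : Real.sin (x - y) = 0) : x = y := by
  have := (sin_eq_zero_iff_of_lt_of_lt (by linarith [hx.1, hy.2]) (by linarith [hx.2, hy.1])).1 h
  linarith

lemma eq_zero_of_sin_eq_zero {θ : ℝ} (hθ : θ ∈ Ico 0 π) (h : Real.sin θ = 0) : θ = 0 :=
  eq_of_sin_sub_eq_zero hθ ⟨le_rfl, pi_pos⟩ (by rwa [sub_zero])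

lemma eq_pi_div_two_of_cos_eq_zero {θ : ℝ} (hθ : θ ∈ Ico 0 π) (h : Real.cos θ = 0) :
    θ = π / 2 :=
  (eq_of_sin_sub_eq_zero ⟨by positivity, by linarith [pi_pos]⟩ hθ
    (by rwa [Real.sin_pi_div_two_sub])).symm

lemma sin_sub_eq_zero_of_ofReal_mul_exp_eq {p q x y : ℝ} (hp : p ≠ 0)
    (h : (p : ℂ) * exp (x * I) = q * exp (y * I)) : Real.sin (x - y) = 0 := by
  have hre := congrArg re h
  have him := congrArg im h
  simp only [re_ofReal_mul, im_ofReal_mul, exp_ofReal_mul_I_re, exp_ofReal_mul_I_im] at hre him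
  have : p * Real.sin (x - y) = 0 := by
    rw [Real.sin_sub]
    linear_combination Real.cos y * him - Real.sin y * hre
  exact (mul_eq_zero.1 this).resolve_left hp

theorem half_angle_eq_of_smul_eq {c₁ c₂ : ℂ} (hc₁ : c₁ ≠ 0) (hc₂ : c₂ ≠ 0) {θ₁ θ₂ β₁ β₂ : ℝ}
    (hθ₁ : θ₁ ∈ Ico 0 π) (hθ₂ : θ₂ ∈ Ico 0 π) (hβ₁ : β₁ ∈ Ico 0 π) (hβ₂ : β₂ ∈ Ico 0 π)
    (h : c₁ • ![(Real.cos θ₁ : ℂ), -I * (exp (β₁ * I) * Real.sin θ₁)] =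
      c₂ • ![(Real.cos θ₂ : ℂ), -I * (exp (β₂ * I) * Real.sin θ₂)]) :
    θ₁ = θ₂ ∧ (θ₁ = 0 ∨ θ₁ = π / 2 ∨ β₁ = β₂) := by
  have h₀ : c₁ * Real.cos θ₁ = c₂ * Real.cos θ₂ := by
    simpa only [Pi.smul_apply, Matrix.cons_val_zero, smul_eq_mul] using congr_fun h 0
  have h₁ : c₁ * (exp (β₁ * I) * Real.sin θ₁) = c₂ * (exp (β₂ * I) * Real.sin θ₂) := by
    have h₁' := congr_fun h 1
    simp only [Pi.smul_apply, Matrix.cons_val_one, Matrix.cons_val_zero, smul_eq_mul] at h₁'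
    exact mul_left_cancel₀ (neg_ne_zero.2 I_ne_zero) (by linear_combination h₁')
  have hsin : Real.sin θ₁ = 0 ↔ Real.sin θ₂ = 0 := by
    simpa only [mul_eq_zero, Complex.exp_ne_zero, false_or, ofReal_eq_zero] using
      eq_zero_iff_of_mul_eq_mul hc₁ hc₂ h₁
  have hcos : Real.cos θ₁ = 0 ↔ Real.cos θ₂ = 0 := by
    exact_mod_cast eq_zero_iff_of_mul_eq_mul hc₁ hc₂ h₀
  by_cases hs : Real.sin θ₁ = 0
  · rw [eq_zero_of_sin_eq_zero hθ₁ hs, eq_zero_of_sin_eq_zero hθ₂ (hsin.1 hs)]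
    simp
  by_cases hc : Real.cos θ₁ = 0
  · rw [eq_pi_div_two_of_cos_eq_zero hθ₁ hc, eq_pi_div_two_of_cos_eq_zero hθ₂ (hcos.1 hc)]
    simp
  have hcross : ((Real.cos θ₁ * Real.sin θ₂ : ℝ) : ℂ) * exp (β₂ * I) =
      ((Real.cos θ₂ * Real.sin θ₁ : ℝ) : ℂ) * exp (β₁ * I) := by
    refine mul_left_cancel₀ (mul_ne_zero hc₁ hc₂) ?_
    rw [ofReal_mul, ofReal_mul]
    linear_combination (c₁ * exp (β₁ * I) * Real.sin θ₁) * h₀ - (c₁ * Real.cos θ₁) * h₁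
  have hβ : β₁ = β₂ := (eq_of_sin_sub_eq_zero hβ₂ hβ₁
    (sin_sub_eq_zero_of_ofReal_mul_exp_eq (mul_ne_zero hc (mt hsin.2 hs)) hcross)).symm
  rw [hβ] at hcross
  have hsin_sub : Real.sin (θ₂ - θ₁) = 0 := by
    rw [Real.sin_sub]
    linarith [ofReal_injective (mul_right_cancel₀ (exp_ne_zero _) hcross)]
  exact ⟨(eq_of_sin_sub_eq_zero hθ₂ hθ₁ hsin_sub).symm, .inr (.inr hβ)⟩

theorem state_svd_unique (s₁ s₂ : ℂ) (α₁ α₂ β₁ β₂ : ℝ)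
    (hs₁ : s₁ ≠ 0) (hs₂ : s₂ ≠ 0)
    (hβ₁ : β₁ ∈ Set.Ico 0 Real.pi) (hβ₂ : β₂ ∈ Set.Ico 0 Real.pi)
    (hα₁ : α₁ ∈ Set.Ico 0 (2 * Real.pi)) (hα₂ : α₂ ∈ Set.Ico 0 (2 * Real.pi))
    (hv : s₁ • ![1 + Complex.exp (α₁ * Complex.I),
          Complex.exp (β₁ * Complex.I) * (1 - Complex.exp (α₁ * Complex.I))] =
        s₂ • ![1 + Complex.exp (α₂ * Complex.I),
          Complex.exp (β₂ * Complex.I) * (1 - Complex.exp (α₂ * Complex.I))]) :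
    ((∃ k : ℤ, α₁ - α₂ = k * (2 * Real.pi)) ∧ ∃ m : ℤ, α₁ = m * Real.pi) ∨
      (α₁ = α₂ ∧ β₁ = β₂) := by
  rw [svd_form_eq_smul_half_angle, svd_form_eq_smul_half_angle, smul_smul, smul_smul] at hv
  have half_mem : ∀ α ∈ Ico 0 (2 * π), α / 2 ∈ Ico 0 π := fun α hα ↦
    ⟨by linarith [hα.1], by linarith [hα.2]⟩
  obtain ⟨hα, hα₁_half | hα₁_half | hβ⟩ := half_angle_eq_of_smul_eq (by simp [hs₁])
    (by simp [hs₂]) (half_mem α₁ hα₁) (half_mem α₂ hα₂) hβ₁ hβ₂ hv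
  · exact .inl ⟨⟨0, by push_cast; linarith⟩, ⟨0, by push_cast; linarith⟩⟩
  · exact .inl ⟨⟨0, by push_cast; linarith⟩, ⟨1, by push_cast; linarith⟩⟩
  · exact .inr ⟨by linarith, hβ⟩
end
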